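/- arXiv:math/0405585 — 7 statements merged into one kernel-verified Lean document; each statement's English description precedes it below -/
import Mathlib

section
/- Let V be a real vector space with a paraquaternionic structure (J₁, J₂, J₃), and let † := −Ĵ₁ − Ĵ₂ + Ĵ₃ act on alternating 2-forms on V. Then †² = 2† + 3·id, i.e. for every alternating bilinear form ω on V and all X, Y ∈ V one has (†(†ω))(X,Y) = 2(†ω)(X,Y) + 3ω(X,Y). -/
/-- The operator `Ĵₐ` on bilinear forms: `(Jhat Jₐ ω)(X,Y) = ω(JₐX, JₐY)`. -/
noncomputable def Jhat {V : Type*} [AddCommGroup V] [Module ℝ V]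
    (J : V →ₗ[ℝ] V) (ω : V →ₗ[ℝ] V →ₗ[ℝ] ℝ) : V →ₗ[ℝ] V →ₗ[ℝ] ℝ :=
  ω.compl₁₂ J J

/-- The operator `† = −Ĵ₁ − Ĵ₂ + Ĵ₃` on 2-forms. -/
noncomputable def dag {V : Type*} [AddCommGroup V] [Module ℝ V]
    (J1 J2 J3 : V →ₗ[ℝ] V) (ω : V →ₗ[ℝ] V →ₗ[ℝ] ℝ) : V →ₗ[ℝ] V →ₗ[ℝ] ℝ :=
  -Jhat J1 ω - Jhat J2 ω + Jhat J3 ω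

/-- On a real vector space with a paraquaternionic structure `(J₁, J₂, J₃)`, the operator
`† = −Ĵ₁ − Ĵ₂ + Ĵ₃` on alternating 2-forms satisfies `†² = 2† + 3·id`. -/
theorem stmt_3 {V : Type*} [AddCommGroup V] [Module ℝ V]
    (J1 J2 J3 : V →ₗ[ℝ] V)
    (h1 : J1 ∘ₗ J1 = LinearMap.id) (h2 : J2 ∘ₗ J2 = LinearMap.id)
    (h3 : J3 ∘ₗ J3 = -LinearMap.id)
    (h12 : J1 ∘ₗ J2 = J3) (h21 : J2 ∘ₗ J1 = -J3)
    (ω : V →ₗ[ℝ] V →ₗ[ℝ] ℝ) (halt : ∀ X, ω X X = 0) (X Y : V) :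
    dag J1 J2 J3 (dag J1 J2 J3 ω) X Y = 2 * dag J1 J2 J3 ω X Y + 3 * ω X Y := by
  have e11 : ∀ x, J1 (J1 x) = x := fun x => by
    simpa using DFunLike.congr_fun h1 x
  have e22 : ∀ x, J2 (J2 x) = x := fun x => by
    simpa using DFunLike.congr_fun h2 x
  have e33 : ∀ x, J3 (J3 x) = -x := fun x => by
    simpa using DFunLike.congr_fun h3 x
  have e12 : ∀ x, J1 (J2 x) = J3 x := fun x => by
    simpa using DFunLike.congr_fun h12 x
  have e21 : ∀ x, J2 (J1 x) = -J3 x := fun x => by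
    simpa using DFunLike.congr_fun h21 x
  have e13 : ∀ x, J1 (J3 x) = J2 x := fun x => by
    rw [← e12 x, e11]
  have e32 : ∀ x, J3 (J2 x) = J1 x := fun x => by
    rw [← e12 (J2 x), e22]
  have e31 : ∀ x, J3 (J1 x) = -J2 x := fun x => by
    have h := e21 (J1 x)
    rw [e11] at h
    rw [eq_neg_iff_add_eq_zero] at h ⊢
    rw [add_comm] at h
    exact h
  have e23 : ∀ x, J2 (J3 x) = -J1 x := fun x => by
    conv_lhs => rw [← e22 x, e32 (J2 x), e21 (J2 x)]
    rw [e32]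
  simp only [dag, Jhat, LinearMap.compl₁₂_apply, LinearMap.add_apply, LinearMap.sub_apply,
    LinearMap.neg_apply, e11, e22, e33, e12, e21, e13, e32, e31, e23, map_neg,
    LinearMap.neg_apply]
  ring
end

section
/- Let V be a real vector space with a paraquaternionic structure (J₁, J₂, J₃) and let † := −Ĵ₁ − Ĵ₂ + Ĵ₃ act on alternating 2-forms on V. An alternating 2-form ω on V satisfies †ω = 3ω if and only if ω(J₁X, J₁Y) = −ω(X,Y), ω(J₂X, J₂Y) = −ω(X,Y), and ω(J₃X, J₃Y) = ω(X,Y) for all X, Y ∈ V (i.e. ω is of type (1,1) with respect to all three structures simultaneously). -/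
/-- An alternating 2-form `ω` satisfies `†ω = 3ω` if and only if it is of type (1,1)
with respect to all three structures simultaneously:
`ω(J₁X,J₁Y) = −ω(X,Y)`, `ω(J₂X,J₂Y) = −ω(X,Y)`, `ω(J₃X,J₃Y) = ω(X,Y)`. -/
theorem stmt_5 {V : Type*} [AddCommGroup V] [Module ℝ V]
    (J1 J2 J3 : V →ₗ[ℝ] V)
    (h1 : J1 ∘ₗ J1 = LinearMap.id) (h2 : J2 ∘ₗ J2 = LinearMap.id)
    (h3 : J3 ∘ₗ J3 = -LinearMap.id)
    (h12 : J1 ∘ₗ J2 = J3) (h21 : J2 ∘ₗ J1 = -J3)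
    (ω : V →ₗ[ℝ] V →ₗ[ℝ] ℝ) (halt : ∀ X, ω X X = 0) :
    dag J1 J2 J3 ω = (3 : ℝ) • ω ↔
      ((∀ X Y : V, ω (J1 X) (J1 Y) = -ω X Y)
        ∧ (∀ X Y : V, ω (J2 X) (J2 Y) = -ω X Y)
        ∧ (∀ X Y : V, ω (J3 X) (J3 Y) = ω X Y)) := by
  -- pointwise composition facts
  have e11 : ∀ X : V, J1 (J1 X) = X := fun X => by
    simpa using DFunLike.congr_fun h1 X
  have e22 : ∀ X : V, J2 (J2 X) = X := fun X => by
    simpa using DFunLike.congr_fun h2 X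
  have e33 : ∀ X : V, J3 (J3 X) = -X := fun X => by
    simpa using DFunLike.congr_fun h3 X
  have e12 : ∀ X : V, J1 (J2 X) = J3 X := fun X => by
    simpa using DFunLike.congr_fun h12 X
  have e21 : ∀ X : V, J2 (J1 X) = -(J3 X) := fun X => by
    simpa using DFunLike.congr_fun h21 X
  have e31 : ∀ X : V, J3 (J1 X) = -(J2 X) := by
    intro X
    have : J3 (J1 X) = -(J2 (J1 (J1 X))) := by
      have := e21 (J1 X); rw [this]; simp
    rw [this, e11]
  have e32 : ∀ X : V, J3 (J2 X) = J1 X := by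
    intro X
    rw [← e12 (J2 X), e22]
  have e13 : ∀ X : V, J1 (J3 X) = J2 X := by
    intro X
    rw [← e12 X, e11]
  have e23 : ∀ X : V, J2 (J3 X) = -(J1 X) := by
    intro X
    rw [← e12 X, e21, e32]
  constructor
  · intro H
    have hpt : ∀ X Y : V,
        -(ω (J1 X) (J1 Y)) - ω (J2 X) (J2 Y) + ω (J3 X) (J3 Y) = 3 * ω X Y := by
      intro X Y
      have := DFunLike.congr_fun (DFunLike.congr_fun H X) Y
      simpa [dag, Jhat, LinearMap.compl₁₂_apply, smul_eq_mul] using this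
    have key : ∀ X Y : V, ω (J1 X) (J1 Y) = -ω X Y ∧ ω (J2 X) (J2 Y) = -ω X Y ∧
        ω (J3 X) (J3 Y) = ω X Y := by
      intro X Y
      have eq0 := hpt X Y
      have eq1 := hpt (J1 X) (J1 Y)
      have eq2 := hpt (J2 X) (J2 Y)
      have eq3 := hpt (J3 X) (J3 Y)
      rw [e11, e11, e21, e21, e31, e31] at eq1
      rw [e12, e12, e22, e22, e32, e32] at eq2
      rw [e13, e13, e23, e23, e33, e33] at eq3
      simp only [map_neg, LinearMap.neg_apply, neg_neg] at eq1 eq2 eq3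
      refine ⟨by linarith, by linarith, by linarith⟩
    exact ⟨fun X Y => (key X Y).1, fun X Y => (key X Y).2.1, fun X Y => (key X Y).2.2⟩
  · rintro ⟨hA, hB, hC⟩
    ext X Y
    simp [dag, Jhat, LinearMap.compl₁₂_apply, hA, hB, hC, smul_eq_mul]
    ring
end

section
/- Let V be a real vector space with a paraquaternionic structure (J₁, J₂, J₃). Let F₂ and F₃ be alternating bilinear forms on V satisfying F₃(X,Y) = −F₂(J₁X, Y) for all X, Y ∈ V (i.e. F₂ + εF₃ is of type (0,2) with respect to J₁), and suppose the bilinear form g(X,Y) := F₂(X, J₂Y) is symmetric. Then F₃(X,Y) = g(X, J₃Y) for all X, Y, and g is hyper-parahermitian: g(J₁X,J₁Y) = g(J₂X,J₂Y) = −g(X,Y) and g(J₃X,J₃Y) = g(X,Y) for all X, Y ∈ V. -/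
/-- Let `F₂, F₃` be alternating 2-forms on a real vector space with a paraquaternionic
structure `(J₁, J₂, J₃)`, with `F₃(X,Y) = −F₂(J₁X, Y)` (i.e. `F₂ + εF₃` of type (0,2)
w.r.t. `J₁`), and suppose `g(X,Y) := F₂(X, J₂Y)` is symmetric.  Then `F₃(X,Y) = g(X, J₃Y)`
and `g` is hyper-parahermitian. -/
theorem stmt_8 {V : Type*} [AddCommGroup V] [Module ℝ V]
    (J1 J2 J3 : V →ₗ[ℝ] V)
    (h1 : J1 ∘ₗ J1 = LinearMap.id) (h2 : J2 ∘ₗ J2 = LinearMap.id)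
    (h3 : J3 ∘ₗ J3 = -LinearMap.id)
    (h12 : J1 ∘ₗ J2 = J3) (h21 : J2 ∘ₗ J1 = -J3)
    (F2 F3 : V →ₗ[ℝ] V →ₗ[ℝ] ℝ)
    (hF2alt : ∀ X Y : V, F2 X Y = -F2 Y X)
    (hF3alt : ∀ X Y : V, F3 X Y = -F3 Y X)
    (h23 : ∀ X Y : V, F3 X Y = -F2 (J1 X) Y)
    (g : V → V → ℝ) (hg : ∀ X Y : V, g X Y = F2 X (J2 Y))
    (hgsymm : ∀ X Y : V, g X Y = g Y X) :
    (∀ X Y : V, F3 X Y = g X (J3 Y))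
    ∧ (∀ X Y : V, g (J1 X) (J1 Y) = -g X Y)
    ∧ (∀ X Y : V, g (J2 X) (J2 Y) = -g X Y)
    ∧ (∀ X Y : V, g (J3 X) (J3 Y) = g X Y) := by
  have p1 : ∀ x : V, J1 (J1 x) = x := fun x => congrArg (fun f => f x) h1
  have p2 : ∀ x : V, J2 (J2 x) = x := fun x => congrArg (fun f => f x) h2
  have p12 : ∀ x : V, J1 (J2 x) = J3 x := fun x => congrArg (fun f => f x) h12
  have p21 : ∀ x : V, J2 (J1 x) = -J3 x := fun x => congrArg (fun f => f x) h21
  -- J2 ∘ J3 = -J1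
  have p23 : ∀ x : V, J2 (J3 x) = -J1 x := by
    intro x
    rw [← p12 x, p21, ← p12 (J2 x), p2]
  -- J1 ∘ J3 = J2
  have p13 : ∀ x : V, J1 (J3 x) = J2 x := by
    intro x
    rw [← p12 x, p1]
  -- transfer identity: F2 (J1 X) Y = F2 X (J1 Y)
  have key : ∀ X Y : V, F2 (J1 X) Y = F2 X (J1 Y) := by
    intro X Y
    have e1 : F2 (J1 X) Y = -F3 X Y := by rw [h23]; ring
    rw [e1, hF3alt, h23, hF2alt]
    ring
  -- symmetry of g rewritten for F2
  have gsym' : ∀ X Y : V, F2 X (J2 Y) = F2 Y (J2 X) := by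
    intro X Y; rw [← hg, ← hg, hgsymm]
  refine ⟨?_, ?_, ?_, ?_⟩
  · intro X Y
    rw [hg, p23, map_neg, h23, key]
  · intro X Y
    rw [hg, hg, p21, map_neg, key, p13]
  · intro X Y
    rw [hg, hg, p2, hF2alt, ← hg, hgsymm, hg]
  · intro X Y
    rw [hg, hg, p23, map_neg, ← p12 X, key, p1, hF2alt, ← hg, hgsymm, hg]
    ring
end

section
/- Let 𝔤 be a real Lie algebra equipped with a paraquaternionic structure (J₁, J₂, J₃) (linear endomorphisms with J₁² = J₂² = id, J₃² = −id, J₁J₂ = −J₂J₁ = J₃). If two of the three Nijenhuis tensors N_{J₁}, N_{J₂}, N_{J₃} vanish identically, then so does the third. -/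
/-- The Nijenhuis tensor of a linear endomorphism `J` of a real Lie algebra:
`N_J(x,y) = [Jx,Jy] + J²[x,y] − J[Jx,y] − J[x,Jy]`. -/
def nijenhuis {L : Type*} [LieRing L] [LieAlgebra ℝ L] (J : L →ₗ[ℝ] L) (x y : L) : L :=
  ⁅J x, J y⁆ + J (J ⁅x, y⁆) - J ⁅J x, y⁆ - J ⁅x, J y⁆

/-- On a real Lie algebra with a paraquaternionic structure `(J₁, J₂, J₃)`, if two of the
three Nijenhuis tensors `N_{J₁}, N_{J₂}, N_{J₃}` vanish identically, then so does the
third. -/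
theorem stmt_12 {L : Type*} [LieRing L] [LieAlgebra ℝ L]
    (J1 J2 J3 : L →ₗ[ℝ] L)
    (h1 : ∀ x : L, J1 (J1 x) = x) (h2 : ∀ x : L, J2 (J2 x) = x)
    (h3 : ∀ x : L, J3 (J3 x) = -x)
    (h12 : ∀ x : L, J1 (J2 x) = J3 x) (h21 : ∀ x : L, J2 (J1 x) = -J3 x) :
    ((∀ x y : L, nijenhuis J1 x y = 0) → (∀ x y : L, nijenhuis J2 x y = 0) →
      (∀ x y : L, nijenhuis J3 x y = 0))
    ∧ ((∀ x y : L, nijenhuis J1 x y = 0) → (∀ x y : L, nijenhuis J3 x y = 0) →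
      (∀ x y : L, nijenhuis J2 x y = 0))
    ∧ ((∀ x y : L, nijenhuis J2 x y = 0) → (∀ x y : L, nijenhuis J3 x y = 0) →
      (∀ x y : L, nijenhuis J1 x y = 0)) := by
  have e13 : ∀ x : L, J1 (J3 x) = J2 x := fun x => by
    rw [← h12 x, h1]
  have e32 : ∀ x : L, J3 (J2 x) = J1 x := fun x => by
    rw [← h12 (J2 x), h2]
  have e23 : ∀ x : L, J2 (J3 x) = -J1 x := fun x => by
    rw [← h12 x, h21, e32]
  have e31 : ∀ x : L, J3 (J1 x) = -J2 x := fun x => by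
    rw [← h12 (J1 x), h21, map_neg, e13]
  refine ⟨?_, ?_, ?_⟩
  · intro hA hB x y
    have key : nijenhuis J3 x y =
        (-(1/2) : ℝ) • nijenhuis J1 x y
        + (-(1/2) : ℝ) • J2 (nijenhuis J1 x (J2 y))
        + (-(1/2) : ℝ) • J2 (nijenhuis J1 (J2 x) y)
        + ((1/2) : ℝ) • nijenhuis J1 (J2 x) (J2 y)
        + (-(1/2) : ℝ) • nijenhuis J2 x y
        + (-(1/2) : ℝ) • J1 (nijenhuis J2 x (J1 y))
        + (-(1/2) : ℝ) • J1 (nijenhuis J2 (J1 x) y)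
        + ((1/2) : ℝ) • nijenhuis J2 (J1 x) (J1 y) := by
      simp only [nijenhuis, map_add, map_sub, map_neg, lie_neg, neg_lie,
        h1, h2, h3, h12, h21, e13, e23, e31, e32]
      module
    rw [key, hA, hB, hA, hA, hA, hB, hB, hB]
    simp
  · intro hA hB x y
    have key : nijenhuis J2 x y =
        ((1/2) : ℝ) • nijenhuis J1 x y
        + (-(1/2) : ℝ) • J2 (nijenhuis J1 x (J2 y))
        + (-(1/2) : ℝ) • J2 (nijenhuis J1 (J2 x) y)
        + ((1/2) : ℝ) • nijenhuis J1 (J2 x) (J2 y)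
        + (-(1/2) : ℝ) • nijenhuis J3 x y
        + (-(1/2) : ℝ) • J1 (nijenhuis J3 x (J1 y))
        + (-(1/2) : ℝ) • J1 (nijenhuis J3 (J1 x) y)
        + ((1/2) : ℝ) • nijenhuis J3 (J1 x) (J1 y) := by
      simp only [nijenhuis, map_add, map_sub, map_neg, lie_neg, neg_lie,
        h1, h2, h3, h12, h21, e13, e23, e31, e32]
      module
    rw [key, hA, hB, hA, hA, hA, hB, hB, hB]
    simp
  · intro hA hB x y
    have key : nijenhuis J1 x y =
        ((1/2) : ℝ) • nijenhuis J2 x y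
        + (-(1/2) : ℝ) • J1 (nijenhuis J2 x (J1 y))
        + (-(1/2) : ℝ) • J1 (nijenhuis J2 (J1 x) y)
        + ((1/2) : ℝ) • nijenhuis J2 (J1 x) (J1 y)
        + (-(1/2) : ℝ) • nijenhuis J3 x y
        + ((1/2) : ℝ) • J1 (nijenhuis J3 x (J1 y))
        + ((1/2) : ℝ) • J1 (nijenhuis J3 (J1 x) y)
        + (-(1/2) : ℝ) • nijenhuis J3 (J1 x) (J1 y) := by
      simp only [nijenhuis, map_add, map_sub, map_neg, lie_neg, neg_lie,
        h1, h2, h3, h12, h21, e13, e23, e31, e32]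
      module
    rw [key, hA, hB, hA, hA, hA, hB, hB, hB]
    simp
end

section
/- Let 𝔤 be a real Lie algebra equipped with a paraquaternionic structure (J₁, J₂, J₃) whose three Nijenhuis tensors all vanish: N_{J₁} = N_{J₂} = N_{J₃} = 0. Then for every triple (c₁, c₂, c₃) of real numbers with c₁² + c₂² − c₃² = −1 or c₁² + c₂² − c₃² = 1, the endomorphism J := c₁J₁ + c₂J₂ + c₃J₃ also has vanishing Nijenhuis tensor N_J = 0. (All complex structures of the two-sheeted hyperboloid S²₁(−1) and all paracomplex structures of the one-sheeted hyperboloid S²₁(1) are integrable.) -/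
/-- On a real Lie algebra with a paraquaternionic structure `(J₁, J₂, J₃)` whose three
Nijenhuis tensors vanish, every `J = c₁J₁ + c₂J₂ + c₃J₃` with `c₁² + c₂² − c₃² = ∓1`
(an element of either hyperboloid `S²₁(∓1)`) also has vanishing Nijenhuis tensor. -/
theorem stmt_13 {L : Type*} [LieRing L] [LieAlgebra ℝ L]
    (J1 J2 J3 : L →ₗ[ℝ] L)
    (h1 : ∀ x : L, J1 (J1 x) = x) (h2 : ∀ x : L, J2 (J2 x) = x)
    (h3 : ∀ x : L, J3 (J3 x) = -x)
    (h12 : ∀ x : L, J1 (J2 x) = J3 x) (h21 : ∀ x : L, J2 (J1 x) = -J3 x)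
    (hN1 : ∀ x y : L, nijenhuis J1 x y = 0)
    (hN2 : ∀ x y : L, nijenhuis J2 x y = 0)
    (hN3 : ∀ x y : L, nijenhuis J3 x y = 0)
    (c₁ c₂ c₃ : ℝ)
    (hc : c₁ ^ 2 + c₂ ^ 2 - c₃ ^ 2 = -1 ∨ c₁ ^ 2 + c₂ ^ 2 - c₃ ^ 2 = 1) :
    ∀ x y : L, nijenhuis (c₁ • J1 + c₂ • J2 + c₃ • J3) x y = 0 := by
  have h13 : ∀ x : L, J1 (J3 x) = J2 x := fun x => by rw [← h12, h1]
  have h32 : ∀ x : L, J3 (J2 x) = J1 x := fun x => by rw [← h12, h2]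
  have h31 : ∀ x : L, J3 (J1 x) = -J2 x := fun x => by
    rw [← h12 (J1 x), h21, map_neg, h13]
  have h23 : ∀ x : L, J2 (J3 x) = -J1 x := fun x => by
    rw [← h12 x, h21, h32]
  intro x y
  have E1 := hN1 x y
  have E2 := hN2 x y
  have E3 := hN3 x y
  have e1 := hN1 x (J3 y)
  have e2 := hN1 (J2 x) (J1 y)
  have e3 := congrArg J2 (hN1 x (J1 y))
  have e4 := congrArg J2 (hN1 (J2 x) (J3 y))
  have e5 := hN2 x (J3 y)
  have e6 := hN2 (J1 x) (J2 y)
  have e7 := congrArg J1 (hN2 x (J2 y))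
  have e8 := congrArg J1 (hN2 (J1 x) (J3 y))
  have e9 := hN1 x (J2 y)
  have e10 := hN1 (J2 x) y
  have e11 := congrArg J2 (hN1 x y)
  have e12 := congrArg J2 (hN1 (J2 x) (J2 y))
  have e13 := hN2 x (J2 y)
  have e14 := hN2 (J1 x) (J3 y)
  have e15 := congrArg J1 (hN2 x (J3 y))
  have e16 := congrArg J1 (hN2 (J1 x) (J2 y))
  have e17 := hN1 x (J1 y)
  have e18 := hN1 (J2 x) (J3 y)
  have e19 := congrArg J2 (hN1 x (J3 y))
  have e20 := congrArg J2 (hN1 (J2 x) (J1 y))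
  have e21 := hN2 x (J1 y)
  have e22 := hN2 (J1 x) y
  have e23 := congrArg J1 (hN2 x y)
  have e24 := congrArg J1 (hN2 (J1 x) (J1 y))
  simp only [nijenhuis, LinearMap.add_apply, LinearMap.smul_apply, map_add, map_sub, map_smul,
    map_neg, map_zero, add_lie, lie_add, smul_lie, lie_smul, neg_lie, lie_neg, smul_add,
    smul_neg, neg_neg, h1, h2, h3, h12, h21, h13, h31, h23, h32] at *
  linear_combination (norm := module) (c₁^2) • E1 + (c₂^2) • E2 + (c₃^2) • E3
    + (c₁*c₂/2) • e1 + (c₁*c₂/2) • e2 - (c₁*c₂/2) • e3 - (c₁*c₂/2) • e4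
    - (c₁*c₂/2) • e5 + (c₁*c₂/2) • e6 - (c₁*c₂/2) • e7 + (c₁*c₂/2) • e8
    + (c₁*c₃/2) • e9 + (c₁*c₃/2) • e10 - (c₁*c₃/2) • e11 - (c₁*c₃/2) • e12
    - (c₁*c₃/2) • e13 + (c₁*c₃/2) • e14 - (c₁*c₃/2) • e15 + (c₁*c₃/2) • e16
    + (c₂*c₃/2) • e17 + (c₂*c₃/2) • e18 - (c₂*c₃/2) • e19 - (c₂*c₃/2) • e20
    - (c₂*c₃/2) • e21 - (c₂*c₃/2) • e22 + (c₂*c₃/2) • e23 + (c₂*c₃/2) • e24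
end

section
/- Let n ≥ 1 and let 𝔫 be a real Lie algebra with basis {X₁,…,X₂ₙ, Y₁,…,Y₂ₙ, Z, E₁, E₂, E₃} whose only nonzero brackets among basis elements are [Xⱼ, Yⱼ] = Z for j = 1,…,2n (so 𝔫 ≅ 𝔥₂ₙ ⊕ ℝ³, the sum of a Heisenberg algebra and an abelian algebra). Define ℝ-linear maps J₂, J₃ on 𝔫 by: J₂X₂ⱼ₋₁ = Y₂ⱼ, J₂X₂ⱼ = Y₂ⱼ₋₁, J₂Y₂ⱼ = X₂ⱼ₋₁, J₂Y₂ⱼ₋₁ = X₂ⱼ, J₂Z = E₂, J₂E₂ = Z, J₂E₁ = −E₃, J₂E₃ = −E₁; and J₃X₂ⱼ₋₁ = X₂ⱼ, J₃X₂ⱼ = −X₂ⱼ₋₁, J₃Y₂ⱼ₋₁ = Y₂ⱼ, J₃Y₂ⱼ = −Y₂ⱼ₋₁, J₃Z = E₁, J₃E₁ = −Z, J₃E₂ = E₃, J₃E₃ = −E₂ (for j = 1,…,n). Then J₂² = id, J₃² = −id, J₂J₃ = −J₃J₂, and J₂ is an Abelian paracomplex structure ([J₂a, J₂b] = −[a,b]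 for all a, b ∈ 𝔫) while J₃ is an Abelian complex structure ([J₃a, J₃b] = [a,b] for all a, b ∈ 𝔫); consequently, setting J₁ := J₃J₂, the triple (J₁, J₂, J₃) is a paraquaternionic structure on 𝔫 with vanishing Nijenhuis tensors N_{J₁} = N_{J₂} = N_{J₃} = 0. -/
section AbelianStructures

variable {L : Type*} [LieRing L] [LieAlgebra ℝ L]

def IsAbelianParacomplex (J : L →ₗ[ℝ] L) : Prop :=
  (∀ v, J (J v) = v) ∧ ∀ a b, ⁅J a, J b⁆ = -⁅a, b⁆

def IsAbelianComplex (J : L →ₗ[ℝ] L) : Prop :=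
  (∀ v, J (J v) = -v) ∧ ∀ a b, ⁅J a, J b⁆ = ⁅a, b⁆

variable {J : L →ₗ[ℝ] L}

theorem nijenhuis_eq_zero_of_apply_apply_eq_smul {c : ℝ} (hc : c ≠ 0)
    (hsq : ∀ v, J (J v) = c • v) (hlie : ∀ a b, ⁅J a, J b⁆ = -(c • ⁅a, b⁆)) (x y : L) :
    nijenhuis J x y = 0 := by
  have hskew : ⁅J x, y⁆ = -⁅x, J y⁆ := by
    have h := hlie x (J y)
    rw [hsq, lie_smul, ← smul_neg] at h
    exact smul_right_injective L hc h
  simp only [nijenhuis, hlie, hsq, hskew, map_neg]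
  abel

theorem IsAbelianParacomplex.nijenhuis_eq_zero (hJ : IsAbelianParacomplex J) (x y : L) :
    nijenhuis J x y = 0 :=
  nijenhuis_eq_zero_of_apply_apply_eq_smul one_ne_zero (by simpa using hJ.1)
    (by simpa using hJ.2) x y

theorem IsAbelianComplex.nijenhuis_eq_zero (hJ : IsAbelianComplex J) (x y : L) :
    nijenhuis J x y = 0 :=
  nijenhuis_eq_zero_of_apply_apply_eq_smul (neg_ne_zero.2 one_ne_zero) (by simpa using hJ.1)
    (by simpa using hJ.2) x y

theorem IsAbelianParacomplex.comp {J₂ J₃ : L →ₗ[ℝ] L} (hJ₂ : IsAbelianParacomplex J₂)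
    (hJ₃ : IsAbelianComplex J₃) (hanti : ∀ v, J₂ (J₃ v) = -J₃ (J₂ v)) :
    IsAbelianParacomplex (J₃ ∘ₗ J₂) :=
  ⟨fun v => by simp [hanti, hJ₂.1, hJ₃.1], fun a b => by simp [hJ₂.2, hJ₃.2]⟩

end AbelianStructures

theorem lie_eq_zero_comm {L : Type*} [LieRing L] {x y : L} : ⁅x, y⁆ = 0 ↔ ⁅y, x⁆ = 0 := by
  rw [← lie_skew, neg_eq_zero]

theorem LinearMap.ext_on_union_range_insert {R M P : Type*} [CommRing R] [AddCommGroup M]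
    [Module R M] [AddCommGroup P] [Module R P] {ι : Type*} {Xodd Xev Yodd Yev : ι → M}
    {Z E1 E2 E3 : M}
    (hspan : Submodule.span R
      (Set.range Xodd ∪ Set.range Xev ∪ Set.range Yodd ∪ Set.range Yev ∪ {Z, E1, E2, E3}) = ⊤)
    {f g : M →ₗ[R] P} (hXo : ∀ j, f (Xodd j) = g (Xodd j)) (hXe : ∀ j, f (Xev j) = g (Xev j))
    (hYo : ∀ j, f (Yodd j) = g (Yodd j)) (hYe : ∀ j, f (Yev j) = g (Yev j))
    (hZ : f Z = g Z) (hE1 : f E1 = g E1) (hE2 : f E2 = g E2) (hE3 : f E3 = g E3) : f = g := by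
  refine LinearMap.ext_on hspan ?_
  simp only [Set.eqOn_union, Set.eqOn_range]
  refine ⟨⟨⟨⟨funext hXo, funext hXe⟩, funext hYo⟩, funext hYe⟩, ?_⟩
  rintro x (rfl | rfl | rfl | rfl) <;> assumption

section KroneckerBracket

variable {L ι : Type*} [LieRing L] [DecidableEq ι] {x y : ι → L} {z : L}

theorem lie_eq_ite_of_lie_eq (hdiag : ∀ i, ⁅x i, y i⁆ = z) (hoff : ∀ i j, i ≠ j → ⁅x i, y j⁆ = 0)
    (i j : ι) : ⁅x i, y j⁆ = if i = j then z else 0 := by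
  split_ifs with h
  · exact h ▸ hdiag i
  · exact hoff i j h

theorem lie_eq_neg_ite_of_lie_eq (hdiag : ∀ i, ⁅x i, y i⁆ = z)
    (hoff : ∀ i j, i ≠ j → ⁅x i, y j⁆ = 0) (i j : ι) :
    ⁅y i, x j⁆ = -if j = i then z else 0 := by
  rw [← lie_skew, lie_eq_ite_of_lie_eq hdiag hoff]

end KroneckerBracket

theorem stmt_15_general {N : Type*} [LieRing N] [LieAlgebra ℝ N] (n : ℕ)
    (Xodd Xev Yodd Yev : Fin n → N) (Z E1 E2 E3 : N)
    (hspan : Submodule.span ℝ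
      (Set.range Xodd ∪ Set.range Xev ∪ Set.range Yodd ∪ Set.range Yev
        ∪ {Z, E1, E2, E3}) = ⊤)
    -- the only nonzero brackets among basis elements are [Xⱼ, Yⱼ] = Z
    (hXY : ∀ j, ⁅Xodd j, Yodd j⁆ = Z) (hXY' : ∀ j, ⁅Xev j, Yev j⁆ = Z)
    (hXoXo : ∀ i j, ⁅Xodd i, Xodd j⁆ = 0) (hXoXe : ∀ i j, ⁅Xodd i, Xev j⁆ = 0)
    (hXeXe : ∀ i j, ⁅Xev i, Xev j⁆ = 0)
    (hXoYo : ∀ i j, i ≠ j → ⁅Xodd i, Yodd j⁆ = 0)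
    (hXoYe : ∀ i j, ⁅Xodd i, Yev j⁆ = 0) (hXeYo : ∀ i j, ⁅Xev i, Yodd j⁆ = 0)
    (hXeYe : ∀ i j, i ≠ j → ⁅Xev i, Yev j⁆ = 0)
    (hYoYo : ∀ i j, ⁅Yodd i, Yodd j⁆ = 0) (hYoYe : ∀ i j, ⁅Yodd i, Yev j⁆ = 0)
    (hYeYe : ∀ i j, ⁅Yev i, Yev j⁆ = 0)
    -- Z, E₁, E₂, E₃ are central
    (hZ : ∀ v : N, ⁅Z, v⁆ = 0) (hE1 : ∀ v : N, ⁅E1, v⁆ = 0)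
    (hE2 : ∀ v : N, ⁅E2, v⁆ = 0) (hE3 : ∀ v : N, ⁅E3, v⁆ = 0)
    -- the endomorphisms J₂ and J₃
    (J2 J3 : N →ₗ[ℝ] N)
    (hJ2Xo : ∀ j, J2 (Xodd j) = Yev j) (hJ2Xe : ∀ j, J2 (Xev j) = Yodd j)
    (hJ2Ye : ∀ j, J2 (Yev j) = Xodd j) (hJ2Yo : ∀ j, J2 (Yodd j) = Xev j)
    (hJ2Z : J2 Z = E2) (hJ2E2 : J2 E2 = Z) (hJ2E1 : J2 E1 = -E3) (hJ2E3 : J2 E3 = -E1)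
    (hJ3Xo : ∀ j, J3 (Xodd j) = Xev j) (hJ3Xe : ∀ j, J3 (Xev j) = -Xodd j)
    (hJ3Yo : ∀ j, J3 (Yodd j) = Yev j) (hJ3Ye : ∀ j, J3 (Yev j) = -Yodd j)
    (hJ3Z : J3 Z = E1) (hJ3E1 : J3 E1 = -Z) (hJ3E2 : J3 E2 = E3) (hJ3E3 : J3 E3 = -E2) :
    -- J₂² = id, J₃² = −id, J₂J₃ = −J₃J₂
    (∀ v : N, J2 (J2 v) = v)
    ∧ (∀ v : N, J3 (J3 v) = -v)
    ∧ (∀ v : N, J2 (J3 v) = -J3 (J2 v))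
    -- J₂ is Abelian paracomplex, J₃ is Abelian complex
    ∧ (∀ a b : N, ⁅J2 a, J2 b⁆ = -⁅a, b⁆)
    ∧ (∀ a b : N, ⁅J3 a, J3 b⁆ = ⁅a, b⁆)
    -- with J₁ := J₃J₂: paraquaternionic identities
    ∧ (∀ v : N, (J3 ∘ₗ J2) ((J3 ∘ₗ J2) v) = v)
    ∧ (∀ v : N, (J3 ∘ₗ J2) (J2 v) = J3 v)
    ∧ (∀ v : N, J2 ((J3 ∘ₗ J2) v) = -J3 v)
    -- vanishing Nijenhuis tensors
    ∧ (∀ x y : N, nijenhuis (J3 ∘ₗ J2) x y = 0)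
    ∧ (∀ x y : N, nijenhuis J2 x y = 0)
    ∧ (∀ x y : N, nijenhuis J3 x y = 0) := by
  have ext := @LinearMap.ext_on_union_range_insert ℝ N
  have hJ2sq : J2 ∘ₗ J2 = LinearMap.id := by
    refine ext hspan ?_ ?_ ?_ ?_ ?_ ?_ ?_ ?_ <;>
      simp [hJ2Xo, hJ2Xe, hJ2Ye, hJ2Yo, hJ2Z, hJ2E2, hJ2E1, hJ2E3]
  have hJ3sq : J3 ∘ₗ J3 = -LinearMap.id := by
    refine ext hspan ?_ ?_ ?_ ?_ ?_ ?_ ?_ ?_ <;>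
      simp [hJ3Xo, hJ3Xe, hJ3Ye, hJ3Yo, hJ3Z, hJ3E2, hJ3E1, hJ3E3]
  have hanti_comp : J2 ∘ₗ J3 = -(J3 ∘ₗ J2) := by
    refine ext hspan ?_ ?_ ?_ ?_ ?_ ?_ ?_ ?_ <;>
      simp [hJ2Xo, hJ2Xe, hJ2Ye, hJ2Yo, hJ2Z, hJ2E2, hJ2E1, hJ2E3,
        hJ3Xo, hJ3Xe, hJ3Ye, hJ3Yo, hJ3Z, hJ3E2, hJ3E1, hJ3E3]
  have hcentral : ∀ v, ⁅v, Z⁆ = 0 ∧ ⁅v, E1⁆ = 0 ∧ ⁅v, E2⁆ = 0 ∧ ⁅v, E3⁆ = 0 := fun v =>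
    ⟨lie_eq_zero_comm.1 (hZ v), lie_eq_zero_comm.1 (hE1 v), lie_eq_zero_comm.1 (hE2 v),
      lie_eq_zero_comm.1 (hE3 v)⟩
  have hlie2 :
      (LieAlgebra.ad ℝ N : N →ₗ[ℝ] N →ₗ[ℝ] N).compl₁₂ J2 J2 = -LieAlgebra.ad ℝ N := by
    refine ext hspan ?_ ?_ ?_ ?_ ?_ ?_ ?_ ?_ <;> (try intro i) <;>
      refine ext hspan ?_ ?_ ?_ ?_ ?_ ?_ ?_ ?_ <;> (try intro j) <;>
      simp [hJ2Xo, hJ2Xe, hJ2Ye, hJ2Yo, hJ2Z, hJ2E2, hJ2E1, hJ2E3, hZ, hE1, hE2, hE3, hcentral,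
        hXoXo, hXoXe, hXeXe, hYoYo, hYoYe, hYeYe, hXoYe, hXeYo,
        lie_eq_ite_of_lie_eq hXY hXoYo, lie_eq_ite_of_lie_eq hXY' hXeYe,
        lie_eq_neg_ite_of_lie_eq hXY hXoYo, lie_eq_neg_ite_of_lie_eq hXY' hXeYe, lie_eq_zero_comm,
        eq_comm]
  have hlie3 :
      (LieAlgebra.ad ℝ N : N →ₗ[ℝ] N →ₗ[ℝ] N).compl₁₂ J3 J3 = LieAlgebra.ad ℝ N := by
    refine ext hspan ?_ ?_ ?_ ?_ ?_ ?_ ?_ ?_ <;> (try intro i) <;>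
      refine ext hspan ?_ ?_ ?_ ?_ ?_ ?_ ?_ ?_ <;> (try intro j) <;>
      simp [hJ3Xo, hJ3Xe, hJ3Ye, hJ3Yo, hJ3Z, hJ3E2, hJ3E1, hJ3E3, hZ, hE1, hE2, hE3, hcentral,
        hXoXo, hXoXe, hXeXe, hYoYo, hYoYe, hYeYe, hXoYe, hXeYo,
        lie_eq_ite_of_lie_eq hXY hXoYo, lie_eq_ite_of_lie_eq hXY' hXeYe,
        lie_eq_neg_ite_of_lie_eq hXY hXoYo, lie_eq_neg_ite_of_lie_eq hXY' hXeYe, lie_eq_zero_comm,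
        eq_comm]
  have hJ2 : IsAbelianParacomplex J2 :=
    ⟨LinearMap.congr_fun hJ2sq, fun a b => by simpa using LinearMap.congr_fun₂ hlie2 a b⟩
  have hJ3 : IsAbelianComplex J3 :=
    ⟨LinearMap.congr_fun hJ3sq, fun a b => by simpa using LinearMap.congr_fun₂ hlie3 a b⟩
  have hanti : ∀ v, J2 (J3 v) = -J3 (J2 v) := LinearMap.congr_fun hanti_comp
  have hJ1 := hJ2.comp hJ3 hanti
  exact ⟨hJ2.1, hJ3.1, hanti, hJ2.2, hJ3.2, hJ1.1, fun v => by simp [hJ2.1],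
    fun v => by simp [hanti, hJ2.1], hJ1.nijenhuis_eq_zero, hJ2.nijenhuis_eq_zero,
    hJ3.nijenhuis_eq_zero⟩

/-- On `𝔫 = 𝔥₂ₙ ⊕ ℝ³` (Heisenberg ⊕ abelian) with basis
`Xodd j = X₂ⱼ₋₁, Xev j = X₂ⱼ, Yodd j = Y₂ⱼ₋₁, Yev j = Y₂ⱼ` (`j = 1,…,n`), `Z, E₁, E₂, E₃`,
whose only nonzero brackets among basis elements are `[Xⱼ, Yⱼ] = Z`, the endomorphisms
`J₂` (`X₂ⱼ₋₁ ↦ Y₂ⱼ, X₂ⱼ ↦ Y₂ⱼ₋₁, Y₂ⱼ ↦ X₂ⱼ₋₁, Y₂ⱼ₋₁ ↦ X₂ⱼ, Z ↦ E₂, E₂ ↦ Z, E₁ ↦ −E₃,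
E₃ ↦ −E₁`) and `J₃` (`X₂ⱼ₋₁ ↦ X₂ⱼ, X₂ⱼ ↦ −X₂ⱼ₋₁, Y₂ⱼ₋₁ ↦ Y₂ⱼ, Y₂ⱼ ↦ −Y₂ⱼ₋₁, Z ↦ E₁,
E₁ ↦ −Z, E₂ ↦ E₃, E₃ ↦ −E₂`) satisfy `J₂² = id`, `J₃² = −id`, `J₂J₃ = −J₃J₂`, `J₂` is an
Abelian paracomplex structure, `J₃` is an Abelian complex structure, and with `J₁ := J₃J₂`
the triple `(J₁, J₂, J₃)` is a paraquaternionic structure with vanishing Nijenhuis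
tensors. -/
theorem stmt_15 {N : Type*} [LieRing N] [LieAlgebra ℝ N] (n : ℕ) (hn : 1 ≤ n)
    (Xodd Xev Yodd Yev : Fin n → N) (Z E1 E2 E3 : N)
    -- basis
    (hindep : LinearIndependent ℝ
      (Sum.elim (Sum.elim Xodd Xev) (Sum.elim (Sum.elim Yodd Yev) ![Z, E1, E2, E3])))
    (hspan : Submodule.span ℝ
      (Set.range Xodd ∪ Set.range Xev ∪ Set.range Yodd ∪ Set.range Yev
        ∪ {Z, E1, E2, E3}) = ⊤)
    -- the only nonzero brackets among basis elements are [Xⱼ, Yⱼ] = Z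
    (hXY : ∀ j, ⁅Xodd j, Yodd j⁆ = Z) (hXY' : ∀ j, ⁅Xev j, Yev j⁆ = Z)
    (hXoXo : ∀ i j, ⁅Xodd i, Xodd j⁆ = 0) (hXoXe : ∀ i j, ⁅Xodd i, Xev j⁆ = 0)
    (hXeXe : ∀ i j, ⁅Xev i, Xev j⁆ = 0)
    (hXoYo : ∀ i j, i ≠ j → ⁅Xodd i, Yodd j⁆ = 0)
    (hXoYe : ∀ i j, ⁅Xodd i, Yev j⁆ = 0) (hXeYo : ∀ i j, ⁅Xev i, Yodd j⁆ = 0)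
    (hXeYe : ∀ i j, i ≠ j → ⁅Xev i, Yev j⁆ = 0)
    (hYoYo : ∀ i j, ⁅Yodd i, Yodd j⁆ = 0) (hYoYe : ∀ i j, ⁅Yodd i, Yev j⁆ = 0)
    (hYeYe : ∀ i j, ⁅Yev i, Yev j⁆ = 0)
    -- Z, E₁, E₂, E₃ are central
    (hZ : ∀ v : N, ⁅Z, v⁆ = 0) (hE1 : ∀ v : N, ⁅E1, v⁆ = 0)
    (hE2 : ∀ v : N, ⁅E2, v⁆ = 0) (hE3 : ∀ v : N, ⁅E3, v⁆ = 0)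
    -- the endomorphisms J₂ and J₃
    (J2 J3 : N →ₗ[ℝ] N)
    (hJ2Xo : ∀ j, J2 (Xodd j) = Yev j) (hJ2Xe : ∀ j, J2 (Xev j) = Yodd j)
    (hJ2Ye : ∀ j, J2 (Yev j) = Xodd j) (hJ2Yo : ∀ j, J2 (Yodd j) = Xev j)
    (hJ2Z : J2 Z = E2) (hJ2E2 : J2 E2 = Z) (hJ2E1 : J2 E1 = -E3) (hJ2E3 : J2 E3 = -E1)
    (hJ3Xo : ∀ j, J3 (Xodd j) = Xev j) (hJ3Xe : ∀ j, J3 (Xev j) = -Xodd j)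
    (hJ3Yo : ∀ j, J3 (Yodd j) = Yev j) (hJ3Ye : ∀ j, J3 (Yev j) = -Yodd j)
    (hJ3Z : J3 Z = E1) (hJ3E1 : J3 E1 = -Z) (hJ3E2 : J3 E2 = E3) (hJ3E3 : J3 E3 = -E2) :
    -- J₂² = id, J₃² = −id, J₂J₃ = −J₃J₂
    (∀ v : N, J2 (J2 v) = v)
    ∧ (∀ v : N, J3 (J3 v) = -v)
    ∧ (∀ v : N, J2 (J3 v) = -J3 (J2 v))
    -- J₂ is Abelian paracomplex, J₃ is Abelian complex
    ∧ (∀ a b : N, ⁅J2 a, J2 b⁆ = -⁅a, b⁆)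
    ∧ (∀ a b : N, ⁅J3 a, J3 b⁆ = ⁅a, b⁆)
    -- with J₁ := J₃J₂: paraquaternionic identities
    ∧ (∀ v : N, (J3 ∘ₗ J2) ((J3 ∘ₗ J2) v) = v)
    ∧ (∀ v : N, (J3 ∘ₗ J2) (J2 v) = J3 v)
    ∧ (∀ v : N, J2 ((J3 ∘ₗ J2) v) = -J3 v)
    -- vanishing Nijenhuis tensors
    ∧ (∀ x y : N, nijenhuis (J3 ∘ₗ J2) x y = 0)
    ∧ (∀ x y : N, nijenhuis J2 x y = 0)
    ∧ (∀ x y : N, nijenhuis J3 x y = 0) :=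
  stmt_15_general n Xodd Xev Yodd Yev Z E1 E2 E3 hspan hXY hXY' hXoXo hXoXe hXeXe hXoYo hXoYe hXeYo
    hXeYe hYoYo hYoYe hYeYe hZ hE1 hE2 hE3 J2 J3 hJ2Xo hJ2Xe hJ2Ye hJ2Yo hJ2Z hJ2E2 hJ2E1 hJ2E3
    hJ3Xo hJ3Xe hJ3Yo hJ3Ye hJ3Z hJ3E1 hJ3E2 hJ3E3
end

section
/- Consider the real Lie algebra 𝔤 of all complex 2×2 matrices under the commutator bracket (𝔤 ≅ 2ℝ ⊕ sl(2,ℂ) as a real Lie algebra), with ℝ-basis Z = I₂ (the identity matrix), X = E₁₂ − E₂₁, Y = E₁₂ + E₂₁, W = E₁₁ − E₂₂, U = iZ, V = iX, S = iY, T = iW. Define ℝ-linear maps J₂, J₃ on 𝔤 by J₃: Z ↦ X, X ↦ −Z, Y ↦ W, W ↦ −Y, U ↦ V, V ↦ −U, S ↦ T, T ↦ −S and J₂: Z ↦ W, W ↦ Z, X ↦ Y, Y ↦ X, U ↦ T, T ↦ U, V ↦ S, S ↦ V, and set J₁ := J₃J₂. Then (J₁, J₂, J₃) satisfies the paraquaternionic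 identities (J₁² = J₂² = id, J₃² = −id, J₁J₂ = −J₂J₁ = J₃), all three Nijenhuis tensors vanish (N_{J₁} = N_{J₂} = N_{J₃} = 0), and the symmetric bilinear form g making the basis orthogonal with g(Z,Z) = g(X,X) = g(U,U) = g(V,V) = 1 and g(Y,Y) = g(W,W) = g(S,S) = g(T,T) = −1 is hyper-parahermitian: g(J₁A, J₁B) = g(J₂A, J₂B) = −g(A,B) and g(J₃A, J₃B) = g(A,B) for all A, B ∈ 𝔤. -/
open Matrix

attribute [local instance 100] LieRing.ofAssociativeRing

/-- `E j k`: the complex 2×2 matrix with 1 in row `j`, column `k`, and 0 elsewhere. -/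
noncomputable def Em (j k : Fin 2) : Matrix (Fin 2) (Fin 2) ℂ := Matrix.single j k 1

/-- The real Lie algebra `𝔤` of all complex 2×2 matrices (`≅ 2ℝ ⊕ sl(2,ℂ)`) with its basis. -/
noncomputable def Zm : Matrix (Fin 2) (Fin 2) ℂ := 1
noncomputable def Xm : Matrix (Fin 2) (Fin 2) ℂ := Em 0 1 - Em 1 0
noncomputable def Ym : Matrix (Fin 2) (Fin 2) ℂ := Em 0 1 + Em 1 0
noncomputable def Wm : Matrix (Fin 2) (Fin 2) ℂ := Em 0 0 - Em 1 1
noncomputable def Um : Matrix (Fin 2) (Fin 2) ℂ := Complex.I • Zm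
noncomputable def Vm : Matrix (Fin 2) (Fin 2) ℂ := Complex.I • Xm
noncomputable def Sm : Matrix (Fin 2) (Fin 2) ℂ := Complex.I • Ym
noncomputable def Tm : Matrix (Fin 2) (Fin 2) ℂ := Complex.I • Wm

/-- The basis listed so that the signature is `(1,1,1,1,−1,−1,−1,−1)`. -/
noncomputable def e : Fin 8 → Matrix (Fin 2) (Fin 2) ℂ := ![Zm, Xm, Um, Vm, Ym, Wm, Sm, Tm]

/-- The signs `g(eᵢ,eᵢ)`. -/
noncomputable def eps : Fin 8 → ℝ := ![1, 1, 1, 1, -1, -1, -1, -1]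

/-!
`J₂` and `J₃` are left multiplications by `W` and `X`, and `X`, `W`, `Y = -XW` satisfy the
split-quaternion relations `X² = -1`, `W² = Y² = 1`; this gives the paraquaternionic identities,
with `J₁` left multiplication by `XW`. In any associative algebra a left multiplication has
vanishing Nijenhuis tensor for the commutator bracket. Finally, `J₂` and `J₃` permute the
orthogonal basis up to sign, `J₂` exchanging the positive and negative vectors and `J₃`
preserving the sign of each, so they are an anti-isometry and an isometry of `g`.
-/

lemma Xm_eq : Xm = !![0, 1; -1, 0] := by
  ext i j; fin_cases i <;> fin_cases j <;> simp [Xm, Em, Matrix.single]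
lemma Ym_eq : Ym = !![0, 1; 1, 0] := by
  ext i j; fin_cases i <;> fin_cases j <;> simp [Ym, Em, Matrix.single]
lemma Wm_eq : Wm = !![1, 0; 0, -1] := by
  ext i j; fin_cases i <;> fin_cases j <;> simp [Wm, Em, Matrix.single]

lemma Xm_mul_Xm : Xm * Xm = -1 := by simp [Xm_eq, Matrix.one_fin_two]
lemma Xm_mul_Ym : Xm * Ym = Wm := by simp [Xm_eq, Ym_eq, Wm_eq]
lemma Xm_mul_Wm : Xm * Wm = -Ym := by simp [Xm_eq, Ym_eq, Wm_eq]
lemma Ym_mul_Ym : Ym * Ym = 1 := by simp [Ym_eq, Matrix.one_fin_two]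
lemma Wm_mul_Xm : Wm * Xm = Ym := by simp [Xm_eq, Ym_eq, Wm_eq]
lemma Wm_mul_Ym : Wm * Ym = Xm := by simp [Xm_eq, Ym_eq, Wm_eq]
lemma Wm_mul_Wm : Wm * Wm = 1 := by simp [Wm_eq, Matrix.one_fin_two]

lemma span_range_e : Submodule.span ℝ (Set.range e) = ⊤ := by
  refine Submodule.eq_top_iff'.2 fun A => (Submodule.mem_span_range_iff_exists_fun ℝ).2 ?_
  refine ⟨![((A 0 0).re + (A 1 1).re) / 2, ((A 0 1).re - (A 1 0).re) / 2,
    ((A 0 0).im + (A 1 1).im) / 2, ((A 0 1).im - (A 1 0).im) / 2,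
    ((A 0 1).re + (A 1 0).re) / 2, ((A 0 0).re - (A 1 1).re) / 2,
    ((A 0 1).im + (A 1 0).im) / 2, ((A 0 0).im - (A 1 1).im) / 2], ?_⟩
  ext i j
  fin_cases i <;> fin_cases j <;>
    simp [Fin.sum_univ_eight, e, Zm, Um, Vm, Sm, Tm, Xm_eq, Ym_eq, Wm_eq, Complex.ext_iff] <;>
    constructor <;> ring

lemma nijenhuis_mulLeft {A : Type*} [Ring A] [Algebra ℝ A] (a x y : A) :
    nijenhuis (LinearMap.mulLeft ℝ a) x y = 0 := by
  simp only [nijenhuis, LinearMap.mulLeft_apply, Ring.lie_def]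
  noncomm_ring

lemma apply_apply_eq_mul_of_signed_perm {R M ι : Type*} [CommRing R] [AddCommGroup M]
    [Module R M] [DecidableEq ι] {v : ι → M} (hv : Submodule.span R (Set.range v) = ⊤)
    {g : M →ₗ[R] M →ₗ[R] R} {eps : ι → R} (hg : ∀ i j, g (v i) (v j) = if i = j then eps i else 0)
    {J : M →ₗ[R] M} {σ : ι → ι} (hσ : σ.Injective) {s : ι → R} (hs : ∀ i, s i * s i = 1)
    (hJ : ∀ i, J (v i) = s i • v (σ i)) {c : R} (hc : ∀ i, eps (σ i) = c * eps i) (x y : M) :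
    g (J x) (J y) = c * g x y := by
  have hgJ : g.compl₁₂ J J = c • g :=
    LinearMap.ext_on_range hv fun i => LinearMap.ext_on_range hv fun j => by
      by_cases hij : i = j
      · subst hij
        simp [hJ, hg, hc, ← mul_assoc, hs]
      · simp [hJ, hg, hσ.ne hij, hij]
  exact LinearMap.congr_fun₂ hgJ x y

/-- On the real Lie algebra of all complex 2×2 matrices with basis `Z = I₂, X, Y, W, U, V,
S, T`, the maps `J₂, J₃` defined on the basis as stated, together with `J₁ := J₃J₂`,
satisfy the paraquaternionic identities, have vanishing Nijenhuis tensors, and the neutral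
metric `g` with `g(Z,Z) = g(X,X) = g(U,U) = g(V,V) = 1`,
`g(Y,Y) = g(W,W) = g(S,S) = g(T,T) = −1` is hyper-parahermitian. -/
theorem stmt_18
    (J2 J3 : Matrix (Fin 2) (Fin 2) ℂ →ₗ[ℝ] Matrix (Fin 2) (Fin 2) ℂ)
    (hJ3Z : J3 Zm = Xm) (hJ3X : J3 Xm = -Zm) (hJ3Y : J3 Ym = Wm) (hJ3W : J3 Wm = -Ym)
    (hJ3U : J3 Um = Vm) (hJ3V : J3 Vm = -Um) (hJ3S : J3 Sm = Tm) (hJ3T : J3 Tm = -Sm)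
    (hJ2Z : J2 Zm = Wm) (hJ2W : J2 Wm = Zm) (hJ2X : J2 Xm = Ym) (hJ2Y : J2 Ym = Xm)
    (hJ2U : J2 Um = Tm) (hJ2T : J2 Tm = Um) (hJ2V : J2 Vm = Sm) (hJ2S : J2 Sm = Vm)
    (g : Matrix (Fin 2) (Fin 2) ℂ →ₗ[ℝ] Matrix (Fin 2) (Fin 2) ℂ →ₗ[ℝ] ℝ)
    (hg : ∀ i j : Fin 8, g (e i) (e j) = if i = j then eps i else 0) :
    -- paraquaternionic identities (J₁ := J₃J₂)
    (∀ A : Matrix (Fin 2) (Fin 2) ℂ, J3 (J2 (J3 (J2 A))) = A)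
    ∧ (∀ A : Matrix (Fin 2) (Fin 2) ℂ, J2 (J2 A) = A)
    ∧ (∀ A : Matrix (Fin 2) (Fin 2) ℂ, J3 (J3 A) = -A)
    ∧ (∀ A : Matrix (Fin 2) (Fin 2) ℂ, J3 (J2 (J2 A)) = J3 A)
    ∧ (∀ A : Matrix (Fin 2) (Fin 2) ℂ, J2 (J3 (J2 A)) = -J3 A)
    -- vanishing Nijenhuis tensors
    ∧ (∀ A B : Matrix (Fin 2) (Fin 2) ℂ, nijenhuis (J3 ∘ₗ J2) A B = 0)
    ∧ (∀ A B : Matrix (Fin 2) (Fin 2) ℂ, nijenhuis J2 A B = 0)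
    ∧ (∀ A B : Matrix (Fin 2) (Fin 2) ℂ, nijenhuis J3 A B = 0)
    -- g is hyper-parahermitian
    ∧ (∀ A B : Matrix (Fin 2) (Fin 2) ℂ, g (J3 (J2 A)) (J3 (J2 B)) = -g A B)
    ∧ (∀ A B : Matrix (Fin 2) (Fin 2) ℂ, g (J2 A) (J2 B) = -g A B)
    ∧ (∀ A B : Matrix (Fin 2) (Fin 2) ℂ, g (J3 A) (J3 B) = g A B) := by
  have hJ2 : J2 = LinearMap.mulLeft ℝ Wm := LinearMap.ext_on_range span_range_e fun i => by
    fin_cases i <;>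
      simp [e, hJ2Z, hJ2X, hJ2U, hJ2V, hJ2Y, hJ2W, hJ2S, hJ2T] <;>
      simp [Zm, Um, Vm, Sm, Tm, Wm_mul_Xm, Wm_mul_Ym, Wm_mul_Wm]
  have hJ3 : J3 = LinearMap.mulLeft ℝ Xm := LinearMap.ext_on_range span_range_e fun i => by
    fin_cases i <;>
      simp [e, hJ3Z, hJ3X, hJ3U, hJ3V, hJ3Y, hJ3W, hJ3S, hJ3T] <;>
      simp [Zm, Um, Vm, Sm, Tm, Xm_mul_Xm, Xm_mul_Ym, Xm_mul_Wm]
  -- the permutations are of the indices of `e`, which lists `Z, X, U, V, Y, W, S, T`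
  have hgJ2 : ∀ A B, g (J2 A) (J2 B) = -g A B := by
    simpa using apply_apply_eq_mul_of_signed_perm span_range_e hg
      (σ := ![5, 4, 7, 6, 1, 0, 3, 2]) (by decide) (s := 1) (by simp)
      (fun i => by fin_cases i <;> simp [e, hJ2Z, hJ2X, hJ2U, hJ2V, hJ2Y, hJ2W, hJ2S, hJ2T])
      (c := -1) (fun i => by fin_cases i <;> simp [eps])
  have hgJ3 : ∀ A B, g (J3 A) (J3 B) = g A B := by
    simpa using apply_apply_eq_mul_of_signed_perm span_range_e hg
      (σ := ![1, 0, 3, 2, 5, 4, 7, 6]) (by decide) (s := ![1, -1, 1, -1, 1, -1, 1, -1])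
      (fun i => by fin_cases i <;> simp)
      (fun i => by fin_cases i <;> simp [e, hJ3Z, hJ3X, hJ3U, hJ3V, hJ3Y, hJ3W, hJ3S, hJ3T])
      (c := 1) (fun i => by fin_cases i <;> simp [eps])
  refine ⟨?_, ?_, ?_, ?_, ?_, ?_, ?_, ?_, fun A B => by rw [hgJ3, hgJ2], hgJ2, hgJ3⟩ <;>
    subst hJ2 hJ3 <;> intros
  · simp [← mul_assoc, Xm_mul_Wm, Ym_mul_Ym]
  · simp [← mul_assoc, Wm_mul_Wm]
  · simp [← mul_assoc, Xm_mul_Xm]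
  · simp [← mul_assoc, Wm_mul_Wm]
  · simp [← mul_assoc, Xm_mul_Wm, Wm_mul_Ym]
  · rw [← LinearMap.mulLeft_mul]
    exact nijenhuis_mulLeft _ _ _
  · exact nijenhuis_mulLeft _ _ _
  · exact nijenhuis_mulLeft _ _ _
end
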